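/- Let F be a family of finite graphs such that every graph H in F (with its shortest-path metric) admits an embedding into L1 with distortion at most α ≥ 1. Let G be a finite graph that admits a stochastic β-embedding into F for some β ≥ 1. Then the shortest-path metric of G admits an embedding into L1 with distortion at most α·β. -/

import Mathlib

/-!
Rescale the embedding of each `H k` into `L1` so that it is non-contracting, and concatenate these
embeddings composed with the maps `f k`, weighting the `k`-th block by `p k`. Since the `ℓ1`
distance is additive over blocks of coordinates, the distance of the images of `x` and `y` is
the expectation over `k` of an `L1` distance that lies between `d_G(x, y)` and `α · d_{H k}(f k x, f k y)`;
non-contraction of the `f k` and the bound on their expected stretch finish the proof.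
-/

open Finset

instance : Fact ((1 : ENNReal) ≤ 1) := ⟨le_rfl⟩

/-- `embedsL1 G D`: the shortest-path metric of the graph `G` admits an embedding
into an `L1` space (`ℝ^N` with the `ℓ1` norm, for some finite `N`) with
distortion at most `D`: there is an injective map `f` and a scale `s > 0` with
`s·d(x,y) ≤ ‖f x − f y‖₁ ≤ D·s·d(x,y)` for all vertices `x, y`. -/
def embedsL1 {V : Type*} [Fintype V] (G : SimpleGraph V) (D : ℝ) : Prop :=
  ∃ (N : ℕ) (f : V → PiLp 1 (fun _ : Fin N => ℝ)) (s : ℝ),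
    0 < s ∧ Function.Injective f ∧
      ∀ x y : V,
        s * (G.dist x y : ℝ) ≤ dist (f x) (f y) ∧
          dist (f x) (f y) ≤ D * (s * (G.dist x y : ℝ))

theorem exists_linearIsometryEquiv_piLp_piLp_fin {ι : Type*} [Fintype ι] (q : ENNReal)
    [Fact (1 ≤ q)] (N : ι → ℕ) :
    ∃ M : ℕ, Nonempty (PiLp q (fun k : ι => PiLp q (fun _ : Fin (N k) => ℝ)) ≃ₗᵢ[ℝ]
      PiLp q (fun _ : Fin M => ℝ)) :=
  ⟨_, ⟨(LinearIsometryEquiv.piLpCurry ℝ q fun k (_ : Fin (N k)) => ℝ).symm.trans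
    (LinearIsometryEquiv.piLpCongrLeft q ℝ ℝ (Fintype.equivFin _))⟩⟩

theorem exists_dist_eq_sum_mul_dist {ι V : Type*} [Fintype ι] {N : ι → ℕ} (c : ι → ℝ)
    (hc : ∀ k, 0 ≤ c k) (g : ∀ k, V → PiLp 1 (fun _ : Fin (N k) => ℝ)) :
    ∃ (M : ℕ) (F : V → PiLp 1 (fun _ : Fin M => ℝ)),
      ∀ x y, dist (F x) (F y) = ∑ k, c k * dist (g k x) (g k y) := by
  obtain ⟨M, ⟨Φ⟩⟩ := exists_linearIsometryEquiv_piLp_piLp_fin 1 N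
  refine ⟨M, fun x => Φ (WithLp.toLp 1 fun k => c k • g k x), fun x y => ?_⟩
  rw [Φ.dist_map, PiLp.dist_eq_of_L1]
  refine sum_congr rfl fun k _ => ?_
  rw [PiLp.toLp_apply, PiLp.toLp_apply, dist_smul₀, Real.norm_of_nonneg (hc k)]

theorem embedsL1.exists_noncontracting {V : Type*} [Fintype V] {G : SimpleGraph V} {D : ℝ}
    (h : embedsL1 G D) :
    ∃ (N : ℕ) (g : V → PiLp 1 (fun _ : Fin N => ℝ)), ∀ x y,
      (G.dist x y : ℝ) ≤ dist (g x) (g y) ∧ dist (g x) (g y) ≤ D * G.dist x y := by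
  obtain ⟨N, f, s, hs, -, hf⟩ := h
  refine ⟨N, fun x => s⁻¹ • f x, fun x y => ?_⟩
  rw [dist_smul₀, Real.norm_of_nonneg (inv_nonneg.mpr hs.le), le_inv_mul_iff₀ hs,
    inv_mul_le_iff₀ hs, mul_left_comm]
  exact hf x y

theorem embedsL1_of_noncontracting {V : Type*} [Fintype V] {G : SimpleGraph V}
    (hG : G.Connected) {D : ℝ} {N : ℕ} (g : V → PiLp 1 (fun _ : Fin N => ℝ))
    (hg : ∀ x y, (G.dist x y : ℝ) ≤ dist (g x) (g y) ∧ dist (g x) (g y) ≤ D * G.dist x y) :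
    embedsL1 G D := by
  refine ⟨N, g, 1, one_pos, fun x y hxy => ?_, by simpa only [one_mul] using hg⟩
  have hdist : (G.dist x y : ℝ) ≤ 0 := by simpa only [hxy, dist_self] using (hg x y).1
  exact hG.dist_eq_zero_iff.mp (by exact_mod_cast hdist.antisymm (Nat.cast_nonneg _))

theorem embedsL1_of_stochastic_embedding_general
    {ι : Type*} (Vfam : ι → Type*) [∀ i, Fintype (Vfam i)]
    (H : ∀ i, SimpleGraph (Vfam i))
    (α : ℝ) (hα : 1 ≤ α) (hemb : ∀ i, embedsL1 (H i) α)
    {V : Type*} [Fintype V] (G : SimpleGraph V) (hGconn : G.Connected)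
    (β : ℝ)
    (m : ℕ)
    (p : Fin m → ℝ) (hp : ∀ k, 0 ≤ p k) (hps : ∑ k, p k = 1)
    (idx : Fin m → ι) (f : ∀ k, V → Vfam (idx k))
    (hnoncontract : ∀ k x y, (G.dist x y : ℝ) ≤ ((H (idx k)).dist (f k x) (f k y) : ℝ))
    (hexpand : ∀ x y, ∑ k, p k * ((H (idx k)).dist (f k x) (f k y) : ℝ) ≤ β * (G.dist x y : ℝ)) :
    embedsL1 G (α * β) := by
  choose N g hg using fun k => (hemb (idx k)).exists_noncontracting
  obtain ⟨M, F, hF⟩ := exists_dist_eq_sum_mul_dist p hp fun k => g k ∘ f k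
  refine embedsL1_of_noncontracting hGconn F fun x y => ⟨?_, ?_⟩ <;> rw [hF]
  · calc (G.dist x y : ℝ) = ∑ k, p k * G.dist x y := by rw [← sum_mul, hps, one_mul]
      _ ≤ ∑ k, p k * dist (g k (f k x)) (g k (f k y)) := sum_le_sum fun k _ =>
          mul_le_mul_of_nonneg_left ((hnoncontract k x y).trans (hg k _ _).1) (hp k)
  · calc ∑ k, p k * dist (g k (f k x)) (g k (f k y))
        ≤ ∑ k, α * (p k * (H (idx k)).dist (f k x) (f k y)) := sum_le_sum fun k _ => by
          rw [mul_left_comm]; exact mul_le_mul_of_nonneg_left (hg k _ _).2 (hp k)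
      _ ≤ α * (β * G.dist x y) := by
          rw [← mul_sum]; exact mul_le_mul_of_nonneg_left (hexpand x y) (by linarith)
      _ = α * β * G.dist x y := (mul_assoc α β _).symm

/-- if every graph `H i` of a family (each carrying its shortest-path
metric) embeds into `L1` with distortion at most `α ≥ 1`, and the connected graph `G`
admits a stochastic `β`-embedding into the family (`β ≥ 1`), i.e. a finitely
supported distribution `p` over indices `idx k` together with non-contracting maps
`f k : V(G) → V(H (idx k))` such that `E[d(f x, f y)] ≤ β·d_G(x,y)`, then `G`
embeds into `L1` with distortion at most `α·β`. -/
theorem embedsL1_of_stochastic_embedding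
    {ι : Type*} (Vfam : ι → Type*) [∀ i, Fintype (Vfam i)]
    (H : ∀ i, SimpleGraph (Vfam i)) (hHconn : ∀ i, (H i).Connected)
    (α : ℝ) (hα : 1 ≤ α) (hemb : ∀ i, embedsL1 (H i) α)
    {V : Type*} [Fintype V] (G : SimpleGraph V) (hGconn : G.Connected)
    (β : ℝ) (hβ : 1 ≤ β)
    (m : ℕ) (hm : 0 < m)
    (p : Fin m → ℝ) (hp : ∀ k, 0 ≤ p k) (hps : ∑ k, p k = 1)
    (idx : Fin m → ι) (f : ∀ k, V → Vfam (idx k))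
    (hnoncontract : ∀ k x y, (G.dist x y : ℝ) ≤ ((H (idx k)).dist (f k x) (f k y) : ℝ))
    (hexpand : ∀ x y, ∑ k, p k * ((H (idx k)).dist (f k x) (f k y) : ℝ) ≤ β * (G.dist x y : ℝ)) :
    embedsL1 G (α * β) :=
  embedsL1_of_stochastic_embedding_general Vfam H α hα hemb G hGconn β m p hp hps idx f hnoncontract
    hexpand
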